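/- Let Γ = (N, {a}, Σ, P, S) be a hyperedge replacement grammar over the one-letter terminal alphabet {a} with type(a) = {1,2}, and let A ∈ N. Suppose (i) there is a derivation S• ⇒*_Γ G in which exactly one hyperedge e of G is labeled A and all other hyperedges of G are labeled a, and (ii) A• ⇒*_Γ H for some a-labeled hypergraph H (with type(H) = type(A)) that has a bad node or an undirected cycle. Then G[e/H] ∈ L(Γ) and G[e/H] is not (isomorphic to) a string graph; in particular, Γ is not string-generating. -/

import Mathlib

namespace HRGPaper

universe u

/-- A hypergraph over a `Finset ℕ`-typed alphabet `C` with typing function `tc`. -/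
structure Hypergraph (C : Type u) (tc : C → Finset ℕ) : Type (max u 1) where
  V : Type
  E : Type
  finV : Finite V
  finE : Finite E
  lab : E → C
  att : (e : E) → (σ : ℕ) → σ ∈ tc (lab e) → V
  extType : Finset ℕ
  ext : (σ : ℕ) → σ ∈ extType → V

variable {C : Type u} {tc : C → Finset ℕ}

/-- An isomorphism of hypergraphs. -/
structure HIso (H K : Hypergraph C tc) where
  vE : H.V ≃ K.V
  eE : H.E ≃ K.E
  lab_eq : ∀ e, K.lab (eE e) = H.lab e
  att_eq : ∀ (e : H.E) (σ : ℕ) (h : σ ∈ tc (H.lab e)) (h' : σ ∈ tc (K.lab (eE e))),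
    K.att (eE e) σ h' = vE (H.att e σ h)
  extType_eq : K.extType = H.extType
  ext_eq : ∀ (σ : ℕ) (h : σ ∈ H.extType) (h' : σ ∈ K.extType),
    K.ext σ h' = vE (H.ext σ h)

/-- Two hypergraphs are isomorphic. -/
def IsIso (H K : Hypergraph C tc) : Prop := Nonempty (HIso H K)

/-- The handle `c•` of a label `c`. -/
def handle (c : C) : Hypergraph C tc where
  V := {σ : ℕ // σ ∈ tc c}
  E := PUnit
  finV := inferInstance
  finE := inferInstance
  lab := fun _ => c
  att := fun _ σ h => ⟨σ, h⟩
  extType := tc c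
  ext := fun σ h => ⟨σ, h⟩

/-- The gluing relation used for hyperedge replacement: the attachment node of `e`
with selector `σ` gets identified with the external node of `K` with selector `σ`. -/
def glueRel (H : Hypergraph C tc) (e : H.E) (K : Hypergraph C tc) :
    (H.V ⊕ K.V) → (H.V ⊕ K.V) → Prop := fun x y =>
  ∃ (σ : ℕ) (h : σ ∈ tc (H.lab e)) (h' : σ ∈ K.extType),
    x = Sum.inl (H.att e σ h) ∧ y = Sum.inr (K.ext σ h')

/-- The replacement `H[e/K]` of the hyperedge `e` in `H` by the hypergraph `K`. -/
def replace (H : Hypergraph C tc) (e : H.E) (K : Hypergraph C tc) : Hypergraph C tc where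
  V := Quot (glueRel H e K)
  E := {e' : H.E // e' ≠ e} ⊕ K.E
  finV := by haveI := H.finV; haveI := K.finV; infer_instance
  finE := by haveI := H.finE; haveI := K.finE; infer_instance
  lab := Sum.elim (fun e' => H.lab e'.1) K.lab
  att := fun e' => Sum.rec (motive := fun e' => (σ : ℕ) →
      σ ∈ tc (Sum.elim (fun e'' : {e' : H.E // e' ≠ e} => H.lab e''.1) K.lab e') →
      Quot (glueRel H e K))
    (fun e₀ σ h => Quot.mk _ (Sum.inl (H.att e₀.1 σ h)))
    (fun eK σ h => Quot.mk _ (Sum.inr (K.att eK σ h))) e'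
  extType := H.extType
  ext := fun σ h => Quot.mk _ (Sum.inl (H.ext σ h))

/-- A hyperedge replacement grammar over the typed alphabet `C`; `isNT` singles out the
nonterminal labels, the remaining labels being terminal. -/
structure HRG (C : Type u) (tc : C → Finset ℕ) where
  isNT : C → Prop
  finC : Finite C
  P : Set (C × Hypergraph C tc)
  finP : P.Finite
  lhs_nt : ∀ p ∈ P, isNT p.1
  rhs_type : ∀ p ∈ P, p.2.extType = tc p.1
  S : C
  S_nt : isNT S

/-- One derivation step of an HRG: replace a hyperedge labeled by the left-hand side of a
production with the right-hand side of that production. -/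
def Step (Γ : HRG C tc) (H H' : Hypergraph C tc) : Prop :=
  ∃ (e : H.E) (p : C × Hypergraph C tc), p ∈ Γ.P ∧ H.lab e = p.1 ∧ H' = replace H e p.2

/-- The derivability relation `⇒*` of an HRG. -/
def Derives (Γ : HRG C tc) : Hypergraph C tc → Hypergraph C tc → Prop :=
  Relation.ReflTransGen (Step Γ)

/-- Derivability in exactly `k` steps. -/
inductive DerivesIn (Γ : HRG C tc) : ℕ → Hypergraph C tc → Hypergraph C tc → Prop
  | refl (H : Hypergraph C tc) : DerivesIn Γ 0 H H
  | tail {k H H' H''} : DerivesIn Γ k H H' → Step Γ H' H'' → DerivesIn Γ (k + 1) H H''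

/-- The language of an HRG: all hypergraphs with terminal labels only that are isomorphic to a
hypergraph derivable from the handle of the start symbol (i.e. the language is considered
up to isomorphism). -/
def Lang (Γ : HRG C tc) : Set (Hypergraph C tc) :=
  {H | (∀ e : H.E, ¬ Γ.isNT (H.lab e)) ∧ ∃ H', Derives Γ (handle Γ.S) H' ∧ IsIso H' H}

/-- The string graph of the word `w`. -/
def SG (w : List C) : Hypergraph C tc where
  V := Fin (w.length + 1)
  E := Fin w.length
  finV := inferInstance
  finE := inferInstance
  lab := fun i => w.get i
  att := fun i σ _ => if σ = 1 then i.castSucc else i.succ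
  extType := {1, 2}
  ext := fun σ _ => if σ = 1 then 0 else Fin.last w.length

/-- An HRG is string-generating if every hypergraph of its language is a string graph. -/
def IsStringGenerating (Γ : HRG C tc) : Prop :=
  ∀ H ∈ Lang Γ, ∃ w : List C, IsIso H (SG w)

/-- A hypergraph is repetition-free if its external map and all its attachment maps
are injective. -/
def RepFree (H : Hypergraph C tc) : Prop :=
  (∀ (σ₁ σ₂ : ℕ) (h₁ : σ₁ ∈ H.extType) (h₂ : σ₂ ∈ H.extType),
      H.ext σ₁ h₁ = H.ext σ₂ h₂ → σ₁ = σ₂) ∧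
  (∀ (e : H.E) (σ₁ σ₂ : ℕ) (h₁ : σ₁ ∈ tc (H.lab e)) (h₂ : σ₂ ∈ tc (H.lab e)),
      H.att e σ₁ h₁ = H.att e σ₂ h₂ → σ₁ = σ₂)

/-- An HRG is repetition-free if all right-hand sides of its productions are repetition-free. -/
def RepFreeGrammar (Γ : HRG C tc) : Prop := ∀ p ∈ Γ.P, RepFree p.2

/-- The size of a hypergraph: number of nodes plus number of hyperedges plus the total number
of attachment nodes of its hyperedges. -/
noncomputable def hgSize (D : Hypergraph C tc) : ℕ :=
  Nat.card D.V + Nat.card D.E + Nat.card ((e : D.E) × {σ : ℕ // σ ∈ tc (D.lab e)})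

/-- The size of a production. -/
noncomputable def prodSize (p : C × Hypergraph C tc) : ℕ :=
  (tc p.1).card + hgSize p.2

/-- The size of an HRG. -/
noncomputable def hrgSize (Γ : HRG C tc) : ℕ :=
  ∑ p ∈ Γ.finP.toFinset, prodSize p

/-- The hypergraph `F(X, f)`: nodes `[n] = {1,…,n}`, a single hyperedge labeled `X`
whose attachment node for selector `j` is `f j`, and all nodes external via `ext j = j`. -/
def Fgraph (X : C) (n : ℕ) (hX : tc X = Finset.Icc 1 n) (f : ℕ → ℕ)
    (hf : ∀ j ∈ Finset.Icc 1 n, f j ∈ Finset.Icc 1 n) : Hypergraph C tc where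
  V := {j : ℕ // j ∈ Finset.Icc 1 n}
  E := PUnit
  finV := inferInstanceAs (Finite ↥(Finset.Icc 1 n))
  finE := inferInstance
  lab := fun _ => X
  att := fun _ σ h => ⟨f σ, hf σ (hX ▸ h)⟩
  extType := Finset.Icc 1 n
  ext := fun σ h => ⟨σ, h⟩

/-- A node is external if it is in the range of the external map. -/
def IsExternal (H : Hypergraph C tc) (v : H.V) : Prop :=
  ∃ (σ : ℕ) (h : σ ∈ H.extType), H.ext σ h = v

/-- The in-degree of a node of an (`a`-labeled) hypergraph: the number of edges whose
attachment node with selector `2` is `v`. -/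
noncomputable def inDeg {C : Type u} {tc : C → Finset ℕ} (H : Hypergraph C tc) (v : H.V) : ℕ :=
  Nat.card {e : H.E // ∃ h : 2 ∈ tc (H.lab e), H.att e 2 h = v}

/-- The out-degree of a node of an (`a`-labeled) hypergraph: the number of edges whose
attachment node with selector `1` is `v`. -/
noncomputable def outDeg {C : Type u} {tc : C → Finset ℕ} (H : Hypergraph C tc) (v : H.V) : ℕ :=
  Nat.card {e : H.E // ∃ h : 1 ∈ tc (H.lab e), H.att e 1 h = v}

/-- A node is bad if it is not external and its in-degree or out-degree differs from `1`. -/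
def BadNode {C : Type u} {tc : C → Finset ℕ} (H : Hypergraph C tc) (v : H.V) : Prop :=
  ¬ IsExternal H v ∧ (inDeg H v ≠ 1 ∨ outDeg H v ≠ 1)

/-- `H` has an undirected cycle `v₁, e₁, …, v_l, e_l`: the `vᵢ` are distinct nodes, the `eᵢ`
are distinct edges, and the unordered pair of attachment nodes of `eᵢ` is `{vᵢ, vᵢ₊₁}`
(indices cyclically). -/
def HasUndirectedCycle {C : Type u} {tc : C → Finset ℕ} (H : Hypergraph C tc) : Prop :=
  ∃ (l : ℕ) (hl : 0 < l) (v : Fin l → H.V) (e : Fin l → H.E),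
    Function.Injective v ∧ Function.Injective e ∧
    ∀ i : Fin l, ∃ (h₁ : 1 ∈ tc (H.lab (e i))) (h₂ : 2 ∈ tc (H.lab (e i))),
      ({H.att (e i) 1 h₁, H.att (e i) 2 h₂} : Set H.V)
        = {v i, v ⟨(i.1 + 1) % l, Nat.mod_lt _ hl⟩}

/-- A hypergraph is bad if it has a bad node or an undirected cycle. -/
def Bad {C : Type u} {tc : C → Finset ℕ} (H : Hypergraph C tc) : Prop :=
  (∃ v : H.V, BadNode H v) ∨ HasUndirectedCycle H

/-- A hypergraph is good if it is not bad. -/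
def Good {C : Type u} {tc : C → Finset ℕ} (H : Hypergraph C tc) : Prop := ¬ Bad H

/-!
Hyperedge replacement is context-free: a derivation `A• ⇒* H` can be replayed inside any
hypergraph at an `A`-labeled hyperedge `e`, so `S• ⇒* G ⇒* G[e/H]` up to isomorphism, and
`G[e/H]` is terminal. The non-external nodes of `H` keep their degrees in `G[e/H]`, and an
undirected cycle of `H` survives in `G[e/H]` at least as a closed trail (gluing may merge its
external nodes, but never its edges). In a string graph every internal node has in- and
out-degree one, and there is no closed trail: a closed trail meets each of its nodes in two of
its edges or in a loop, but string graphs have no loops and the right end of the rightmost edge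
of a trail lies on no other edge of it.
-/

section Morphisms

theorem Hypergraph.att_congr (K : Hypergraph C tc) {e₁ e₂ : K.E} (h : e₁ = e₂) (σ : ℕ)
    (h₁ : σ ∈ tc (K.lab e₁)) (h₂ : σ ∈ tc (K.lab e₂)) : K.att e₁ σ h₁ = K.att e₂ σ h₂ := by
  subst h; rfl

structure HHom (X Y : Hypergraph C tc) where
  vMap : X.V → Y.V
  eMap : X.E → Y.E
  lab_eq : ∀ e, Y.lab (eMap e) = X.lab e
  att_eq : ∀ (e : X.E) (σ : ℕ) (h : σ ∈ tc (X.lab e)) (h' : σ ∈ tc (Y.lab (eMap e))),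
    Y.att (eMap e) σ h' = vMap (X.att e σ h)

def HHom.comp {X Y Z : Hypergraph C tc} (f : HHom X Y) (g : HHom Y Z) : HHom X Z where
  vMap := g.vMap ∘ f.vMap
  eMap := g.eMap ∘ f.eMap
  lab_eq e := (g.lab_eq _).trans (f.lab_eq e)
  att_eq e σ h h' := by
    have hY : σ ∈ tc (Y.lab (f.eMap e)) := by rwa [f.lab_eq]
    simp only [Function.comp_apply, g.att_eq _ σ hY h', f.att_eq e σ h hY]

def HIso.toHHom {X Y : Hypergraph C tc} (ψ : HIso X Y) : HHom X Y :=
  ⟨ψ.vE, ψ.eE, ψ.lab_eq, ψ.att_eq⟩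

def HIso.symm {X Y : Hypergraph C tc} (ψ : HIso X Y) : HIso Y X where
  vE := ψ.vE.symm
  eE := ψ.eE.symm
  lab_eq e := by simpa using (ψ.lab_eq (ψ.eE.symm e)).symm
  att_eq e σ h h' := by
    rw [Equiv.eq_symm_apply, ← ψ.att_eq _ σ h' (by rwa [ψ.lab_eq])]
    exact Y.att_congr (ψ.eE.apply_symm_apply e) σ _ h
  extType_eq := ψ.extType_eq.symm
  ext_eq σ h h' := by rw [Equiv.eq_symm_apply, ← ψ.ext_eq σ h' h]

def HIso.trans {X Y Z : Hypergraph C tc} (φ : HIso X Y) (ψ : HIso Y Z) : HIso X Z where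
  vE := φ.vE.trans ψ.vE
  eE := φ.eE.trans ψ.eE
  lab_eq := (φ.toHHom.comp ψ.toHHom).lab_eq
  att_eq := (φ.toHHom.comp ψ.toHHom).att_eq
  extType_eq := ψ.extType_eq.trans φ.extType_eq
  ext_eq σ h h' := by
    have hY : σ ∈ Y.extType := by rwa [φ.extType_eq]
    simp only [Equiv.trans_apply, ψ.ext_eq σ hY h', φ.ext_eq σ h hY]

def HHom.replaceInr (G : Hypergraph C tc) (e : G.E) (H : Hypergraph C tc) :
    HHom H (replace G e H) where
  vMap v := Quot.mk _ (Sum.inr v)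
  eMap := Sum.inr
  lab_eq _ := rfl
  att_eq _ _ _ _ := rfl

end Morphisms

section ContextFreeness

open Classical in
noncomputable def handleReplaceIso (G : Hypergraph C tc) (e : G.E) :
    HIso (replace G e (handle (G.lab e))) G where
  vE :=
    { toFun := Quot.lift (Sum.elim id fun s => G.att e s.1 s.2) (by
        rintro _ _ ⟨σ, h, h', rfl, rfl⟩
        rfl)
      invFun := fun v => Quot.mk _ (Sum.inl v)
      left_inv := by
        rintro ⟨v | s⟩
        · rfl
        · exact Quot.sound ⟨s.1, s.2, s.2, rfl, rfl⟩
      right_inv := fun _ => rfl }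
  eE :=
    { toFun := Sum.elim Subtype.val fun _ => e
      invFun := fun e' => if h : e' = e then .inr PUnit.unit else .inl ⟨e', h⟩
      left_inv := by
        rintro (⟨e', h⟩ | ⟨⟩)
        · simp [h]; rfl
        · simp; rfl
      right_inv e' := by
        by_cases h : e' = e
        · simp [h]; rfl
        · simp [h] }
  lab_eq := by rintro (_ | _) <;> rfl
  att_eq := by rintro (_ | _) _ _ _ <;> rfl
  extType_eq := rfl
  ext_eq _ _ _ := rfl

def HIso.replace {K L : Hypergraph C tc} (φ : HIso K L) (e : K.E)
    (D : Hypergraph C tc) : HIso (replace K e D) (replace L (φ.eE e) D) where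
  vE := Quot.congr (φ.vE.sumCongr (Equiv.refl D.V)) (by
    rintro (x | x) (y | y) <;>
      simp only [glueRel, Equiv.sumCongr_apply, Sum.map_inl, Sum.map_inr, Equiv.refl_apply,
        Sum.inl.injEq, Sum.inr.injEq, reduceCtorEq, and_false, false_and, exists_false]
    constructor
    · rintro ⟨σ, h, h', rfl, rfl⟩
      exact ⟨σ, by rwa [φ.lab_eq], h', (φ.att_eq e σ h _).symm, rfl⟩
    · rintro ⟨σ, hL, h', hx, rfl⟩
      have h : σ ∈ tc (K.lab e) := by rwa [φ.lab_eq] at hL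
      exact ⟨σ, h, h', φ.vE.injective (hx.trans (φ.att_eq e σ h hL)), rfl⟩)
  eE := (φ.eE.subtypeEquiv fun _ => φ.eE.injective.ne_iff.symm :
      {e' // e' ≠ e} ≃ {e' // e' ≠ φ.eE e}).sumCongr (Equiv.refl D.E)
  lab_eq := by
    rintro (⟨e', _⟩ | _)
    · exact φ.lab_eq e'
    · rfl
  att_eq := by
    rintro (⟨e', _⟩ | _) σ h h'
    · exact congrArg (Quot.mk _ ∘ Sum.inl) (φ.att_eq e' σ h h')
    · rfl
  extType_eq := φ.extType_eq
  ext_eq σ h h' := congrArg (Quot.mk _ ∘ Sum.inl) (φ.ext_eq σ h h')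

def replaceReplaceIso (G : Hypergraph C tc) (e : G.E) (H : Hypergraph C tc) (e₀ : H.E)
    (D : Hypergraph C tc) :
    HIso (replace (replace G e H) (Sum.inr e₀) D) (replace G e (replace H e₀ D)) where
  vE :=
    { toFun := Quot.lift
        (Sum.elim
          (Quot.lift
            (Sum.elim (fun v => Quot.mk _ (Sum.inl v))
              fun v => Quot.mk _ (Sum.inr (Quot.mk _ (Sum.inl v))))
            (by rintro _ _ ⟨σ, h, h', rfl, rfl⟩; exact Quot.sound ⟨σ, h, h', rfl, rfl⟩))
          fun d => Quot.mk _ (Sum.inr (Quot.mk _ (Sum.inr d))))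
        (by
          rintro _ _ ⟨σ, h, h', rfl, rfl⟩
          exact congrArg (Quot.mk _ ∘ Sum.inr) (Quot.sound ⟨σ, h, h', rfl, rfl⟩))
      invFun := Quot.lift
        (Sum.elim (fun v => Quot.mk _ (Sum.inl (Quot.mk _ (Sum.inl v))))
          (Quot.lift
            (Sum.elim (fun v => Quot.mk _ (Sum.inl (Quot.mk _ (Sum.inr v))))
              fun d => Quot.mk _ (Sum.inr d))
            (by rintro _ _ ⟨σ, h, h', rfl, rfl⟩; exact Quot.sound ⟨σ, h, h', rfl, rfl⟩)))
        (by
          rintro _ _ ⟨σ, h, h', rfl, rfl⟩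
          exact congrArg (Quot.mk _ ∘ Sum.inl) (Quot.sound ⟨σ, h, h', rfl, rfl⟩))
      left_inv := by rintro ⟨⟨⟨_ | _⟩⟩ | _⟩ <;> rfl
      right_inv := by rintro ⟨_ | ⟨⟨_ | _⟩⟩⟩ <;> rfl }
  eE :=
    { toFun
        | .inl ⟨.inl e', _⟩ => .inl e'
        | .inl ⟨.inr e', he'⟩ => .inr (.inl ⟨e', fun h => he' (congrArg Sum.inr h)⟩)
        | .inr d => .inr (.inr d)
      invFun
        | .inl e' => .inl ⟨.inl e', Sum.inl_ne_inr⟩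
        | .inr (.inl ⟨e', he'⟩) => .inl ⟨.inr e', fun h => he' (Sum.inr.inj h)⟩
        | .inr (.inr d) => .inr d
      left_inv := by rintro (⟨_ | _, _⟩ | _) <;> rfl
      right_inv := by rintro (_ | ⟨_, _⟩ | _) <;> rfl }
  lab_eq := by rintro (⟨_ | _, _⟩ | _) <;> rfl
  att_eq := by rintro (⟨_ | _, _⟩ | _) _ _ _ <;> rfl
  extType_eq := rfl
  ext_eq _ _ _ := rfl

theorem Derives.exists_isIso_replace {Γ : HRG C tc} {A : C} {H : Hypergraph C tc}
    (hH : Derives Γ (handle A) H) (G : Hypergraph C tc) (e : G.E) (he : G.lab e = A) :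
    ∃ K, Derives Γ G K ∧ IsIso K (replace G e H) := by
  induction hH with
  | refl =>
    subst he
    exact ⟨G, .refl, ⟨(handleReplaceIso G e).symm⟩⟩
  | tail _ step ih =>
    obtain ⟨K, hGK, ⟨φ⟩⟩ := ih
    obtain ⟨e₀, p, hp, hlab, rfl⟩ := step
    set f₀ := φ.eE.symm (Sum.inr e₀)
    have hf₀ : φ.eE f₀ = Sum.inr e₀ := φ.eE.apply_symm_apply _
    have hf₀lab : K.lab f₀ = p.1 := by rw [← φ.lab_eq, hf₀, ← hlab]; rfl
    refine ⟨replace K f₀ p.2, hGK.tail ⟨f₀, p, hp, hf₀lab, rfl⟩, ?_⟩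
    have ψ := φ.replace f₀ p.2
    rw [hf₀] at ψ
    exact ⟨ψ.trans (replaceReplaceIso G e _ e₀ p.2)⟩

end ContextFreeness

section Degrees

noncomputable def attDeg (H : Hypergraph C tc) (σ : ℕ) (v : H.V) : ℕ :=
  Nat.card {e : H.E // ∃ h : σ ∈ tc (H.lab e), H.att e σ h = v}

theorem HIso.attDeg_vE {X Y : Hypergraph C tc} (ψ : HIso X Y) (σ : ℕ) (v : X.V) :
    attDeg Y σ (ψ.vE v) = attDeg X σ v := by
  refine (Nat.card_congr (ψ.eE.subtypeEquiv fun e => ?_)).symm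
  constructor
  · rintro ⟨h, rfl⟩
    exact ⟨by rwa [ψ.lab_eq], ψ.att_eq e σ h _⟩
  · rintro ⟨h', hv⟩
    have h : σ ∈ tc (X.lab e) := by rwa [ψ.lab_eq] at h'
    exact ⟨h, ψ.vE.injective ((ψ.att_eq e σ h h').symm.trans hv)⟩

theorem HIso.not_isExternal {X Y : Hypergraph C tc} (ψ : HIso X Y) {v : X.V}
    (hv : ¬ IsExternal X v) : ¬ IsExternal Y (ψ.vE v) := by
  rintro ⟨σ, hσ, he⟩
  have hσ' : σ ∈ X.extType := ψ.extType_eq ▸ hσ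
  exact hv ⟨σ, hσ', ψ.vE.injective ((ψ.ext_eq σ hσ' hσ).symm.trans he)⟩

theorem BadNode.map_iso {X Y : Hypergraph C tc} {v : X.V} (hv : BadNode X v) (ψ : HIso X Y) :
    BadNode Y (ψ.vE v) := by
  refine ⟨ψ.not_isExternal hv.1, ?_⟩
  have hdeg : attDeg X 2 v ≠ 1 ∨ attDeg X 1 v ≠ 1 := hv.2
  rwa [← ψ.attDeg_vE, ← ψ.attDeg_vE] at hdeg

variable {G : Hypergraph C tc} {e : G.E} {H : Hypergraph C tc} {v : H.V}

theorem mk_eq_mk_inr_iff (hv : ¬ IsExternal H v) {x : G.V ⊕ H.V} :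
    Quot.mk (glueRel G e H) x = Quot.mk _ (Sum.inr v) ↔ x = Sum.inr v := by
  refine ⟨fun hx => ?_, fun hx => hx ▸ rfl⟩
  have hresp : ∀ y z, glueRel G e H y z → (y = Sum.inr v) = (z = Sum.inr v) := by
    rintro _ _ ⟨σ, -, h', rfl, rfl⟩
    exact propext (iff_of_false Sum.inl_ne_inr fun h => hv ⟨σ, h', Sum.inr_injective h⟩)
  simpa using congrArg (Quot.lift _ hresp) hx

theorem not_isExternal_replace_inr (hv : ¬ IsExternal H v) :
    ¬ IsExternal (replace G e H) (Quot.mk _ (Sum.inr v)) := by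
  rintro ⟨σ, h, hext⟩
  exact Sum.inl_ne_inr ((mk_eq_mk_inr_iff hv).1 hext)

theorem attDeg_replace_inr (hv : ¬ IsExternal H v) (σ : ℕ) :
    attDeg (replace G e H) σ (Quot.mk _ (Sum.inr v)) = attDeg H σ v := by
  have : IsEmpty {e' : {e' // e' ≠ e} //
      ∃ h, (replace G e H).att (Sum.inl e') σ h = Quot.mk _ (Sum.inr v)} :=
    ⟨fun ⟨_, _, h⟩ => Sum.inl_ne_inr ((mk_eq_mk_inr_iff hv).1 h)⟩
  refine Nat.card_congr (Equiv.subtypeSum.trans ((Equiv.emptySum _ _).trans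
    (Equiv.subtypeEquivRight fun e' => exists_congr fun h => ?_)))
  exact (mk_eq_mk_inr_iff hv).trans Sum.inr_injective.eq_iff

theorem BadNode.replace_inr (hv : BadNode H v) :
    BadNode (replace G e H) (Quot.mk _ (Sum.inr v)) := by
  refine ⟨not_isExternal_replace_inr hv.1, ?_⟩
  have hdeg : attDeg H 2 v ≠ 1 ∨ attDeg H 1 v ≠ 1 := hv.2
  rwa [← attDeg_replace_inr hv.1, ← attDeg_replace_inr hv.1] at hdeg

end Degrees

section Trails

def HasClosedTrail (H : Hypergraph C tc) : Prop :=
  ∃ (l : ℕ) (_ : 0 < l) (v : Fin l → H.V) (e : Fin l → H.E), Function.Injective e ∧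
    ∀ i, ∃ (h₁ : 1 ∈ tc (H.lab (e i))) (h₂ : 2 ∈ tc (H.lab (e i))),
      ({H.att (e i) 1 h₁, H.att (e i) 2 h₂} : Set H.V) = {v i, v (finRotate l i)}

theorem finRotate_eq_mk_mod {l : ℕ} (hl : 0 < l) (i : Fin l) :
    finRotate l i = ⟨(i + 1) % l, Nat.mod_lt _ hl⟩ := by
  obtain ⟨n, rfl⟩ : ∃ n, l = n + 1 := ⟨l - 1, by omega⟩
  ext
  simp [Fin.val_add]

theorem HasUndirectedCycle.hasClosedTrail {H : Hypergraph C tc} (h : HasUndirectedCycle H) :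
    HasClosedTrail H := by
  obtain ⟨l, hl, v, e, -, he, hends⟩ := h
  exact ⟨l, hl, v, e, he, fun i => by simpa only [finRotate_eq_mk_mod hl] using hends i⟩

theorem HasClosedTrail.map {X Y : Hypergraph C tc} (h : HasClosedTrail X) (f : HHom X Y)
    (hf : Function.Injective f.eMap) : HasClosedTrail Y := by
  obtain ⟨l, hl, v, e, he, hends⟩ := h
  refine ⟨l, hl, f.vMap ∘ v, f.eMap ∘ e, hf.comp he, fun i => ?_⟩
  obtain ⟨h₁, h₂, hi⟩ := hends i
  have h₁' : 1 ∈ tc (Y.lab (f.eMap (e i))) := by rwa [f.lab_eq]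
  have h₂' : 2 ∈ tc (Y.lab (f.eMap (e i))) := by rwa [f.lab_eq]
  refine ⟨h₁', h₂', ?_⟩
  simp only [Function.comp_apply, f.att_eq _ 1 h₁ h₁', f.att_eq _ 2 h₂ h₂', ← Set.image_pair, hi]

end Trails

theorem Fin.not_closed_trail_castSucc_succ {n l : ℕ} (v : Fin l → Fin (n + 1)) {ε : Fin l → Fin n}
    (hε : Function.Injective ε) (hl : 0 < l) :
    ¬ ∀ i, ({(ε i).castSucc, (ε i).succ} : Set (Fin (n + 1))) = {v i, v (finRotate l i)} := by
  intro ends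
  have : Nonempty (Fin l) := ⟨⟨0, hl⟩⟩
  obtain ⟨i₀, hmax⟩ := Finite.exists_max fun i => (ε i : ℕ)
  have only_i₀ : ∀ j, (ε i₀).succ ∈ ({(ε j).castSucc, (ε j).succ} : Set _) → j = i₀ := by
    rintro j (h | h)
    · have := hmax j
      have := congrArg Fin.val h
      simp only [Fin.val_succ, Fin.val_castSucc] at this
      omega
    · exact hε (Fin.succ_injective _ h).symm
  obtain ⟨t, ht⟩ : ∃ t, v t = (ε i₀).succ := by
    have : (ε i₀).succ ∈ ({v i₀, v (finRotate l i₀)} : Set _) := by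
      rw [← ends]
      exact Or.inr rfl
    rcases this with h | h
    · exact ⟨_, h.symm⟩
    · exact ⟨_, h.symm⟩
  have ht₀ : t = i₀ := only_i₀ t (by rw [ends, ht]; exact Or.inl rfl)
  have hpred : (finRotate l).symm t = i₀ :=
    only_i₀ _ (by rw [ends, Equiv.apply_symm_apply, ht]; exact Or.inr rfl)
  have hfix : finRotate l t = t :=
    ((finRotate l).symm_apply_eq.1 (hpred.trans ht₀.symm)).symm
  have hloop := ends t
  rw [hfix, Set.pair_eq_singleton] at hloop
  have h₁ : (ε t).castSucc = v t := hloop.subset (Or.inl rfl)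
  have h₂ : (ε t).succ = v t := hloop.subset (Or.inr rfl)
  exact Fin.castSucc_lt_succ.ne (h₁.trans h₂.symm)

section StringGraphs

variable {w : List C}

theorem SG_not_badNode (hw : ∀ c ∈ w, 1 ∈ tc c ∧ 2 ∈ tc c) (v : Fin (w.length + 1)) :
    ¬ BadNode (SG w : Hypergraph C tc) v := by
  rintro ⟨hext, hdeg⟩
  have hv0 : v ≠ 0 := fun h => hext ⟨1, by simp [SG], by simp [SG, h]⟩
  have hvl : v ≠ Fin.last _ := fun h => hext ⟨2, by simp [SG], by simp [SG, h]⟩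
  have hlab : ∀ j : Fin w.length, 1 ∈ tc (w.get j) ∧ 2 ∈ tc (w.get j) :=
    fun j => hw _ (List.get_mem _ _)
  rcases hdeg with hin | hout
  · refine hin (Nat.card_eq_one_iff_exists.2 ⟨⟨v.pred hv0, (hlab _).2, v.succ_pred hv0⟩, ?_⟩)
    rintro ⟨j, hj, hjv⟩
    exact Subtype.ext (Fin.succ_injective _ (hjv.trans (v.succ_pred hv0).symm))
  · refine hout (Nat.card_eq_one_iff_exists.2
      ⟨⟨v.castPred hvl, (hlab _).1, v.castSucc_castPred hvl⟩, ?_⟩)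
    rintro ⟨j, hj, hjv⟩
    exact Subtype.ext (Fin.castSucc_injective _ (hjv.trans (v.castSucc_castPred hvl).symm))

theorem SG_not_hasClosedTrail (w : List C) : ¬ HasClosedTrail (SG w : Hypergraph C tc) := by
  rintro ⟨l, hl, v, ε, hε, hends⟩
  exact Fin.not_closed_trail_castSucc_succ v hε hl fun i => (hends i).elim fun _ ⟨_, h⟩ => h

end StringGraphs

section Replacement

variable {a : C} {G : Hypergraph C tc} {e : G.E} {H : Hypergraph C tc}

theorem replace_lab_eq (hG : ∀ e' ≠ e, G.lab e' = a) (hH : ∀ e', H.lab e' = a) :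
    ∀ e', (replace G e H).lab e' = a := by
  rintro (⟨e', he'⟩ | e')
  · exact hG e' he'
  · exact hH e'

theorem replace_not_isIso_SG (hta : tc a = {1, 2}) (hG : ∀ e' ≠ e, G.lab e' = a)
    (hH : ∀ e', H.lab e' = a) (hbad : Bad H) (w : List C) :
    ¬ IsIso (replace G e H) (SG w) := by
  rintro ⟨ψ⟩
  rcases hbad with ⟨v, hv⟩ | hcycle
  · have hSG : ∀ j : (SG w : Hypergraph C tc).E, (SG w : Hypergraph C tc).lab j = a := by
      intro j
      rw [← ψ.eE.apply_symm_apply j, ψ.lab_eq]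
      exact replace_lab_eq hG hH _
    have hw : ∀ c ∈ w, 1 ∈ tc c ∧ 2 ∈ tc c := by
      intro c hc
      obtain ⟨j, rfl⟩ := List.get_of_mem hc
      rw [show w.get j = a from hSG j, hta]
      simp
    exact SG_not_badNode hw _ (hv.replace_inr.map_iso ψ)
  · exact SG_not_hasClosedTrail w <| hcycle.hasClosedTrail.map
      ((HHom.replaceInr G e H).comp ψ.toHHom) (ψ.eE.injective.comp Sum.inr_injective)

end Replacement

theorem stmt_13_general (C : Type) (tc : C → Finset ℕ) (Γ : HRG C tc) (a : C)
    (hta : tc a = ({1, 2} : Finset ℕ)) (haT : ¬ Γ.isNT a)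
    (A : C)
    (G : Hypergraph C tc) (hG : Derives Γ (handle Γ.S) G)
    (e : G.E) (heA : G.lab e = A) (hothers : ∀ e' : G.E, e' ≠ e → G.lab e' = a)
    (H : Hypergraph C tc) (hH : Derives Γ (handle A) H)
    (hHlab : ∀ e' : H.E, H.lab e' = a)
    (hbad : Bad H) :
    replace G e H ∈ Lang Γ ∧
    (¬ ∃ w : List C, IsIso (replace G e H) (SG w)) ∧
    ¬ IsStringGenerating Γ := by
  obtain ⟨K, hGK, hK⟩ := hH.exists_isIso_replace G e heA
  have hmem : replace G e H ∈ Lang Γ :=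
    ⟨fun e' => replace_lab_eq hothers hHlab e' ▸ haT, K, hG.trans hGK, hK⟩
  have hnot : ¬ ∃ w : List C, IsIso (replace G e H) (SG w) :=
    fun ⟨w, hw⟩ => replace_not_isIso_SG hta hothers hHlab hbad w hw
  exact ⟨hmem, hnot, fun hsg => hnot (hsg _ hmem)⟩

/-- If some hypergraph `G` with exactly one `A`-labeled hyperedge `e` and all
other hyperedges labeled `a` is derivable in `Γ`, and from `A` one can derive an `a`-labeled
hypergraph `H` having a bad node or an undirected cycle, then `G[e/H]` belongs to `L(Γ)` and
is not a string graph; in particular `Γ` is not string-generating. -/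
theorem stmt_13 (C : Type) (tc : C → Finset ℕ) (Γ : HRG C tc) (a : C)
    (hta : tc a = ({1, 2} : Finset ℕ)) (haT : ¬ Γ.isNT a)
    (hterm : ∀ c : C, ¬ Γ.isNT c → c = a)
    (A : C) (hA : Γ.isNT A)
    (G : Hypergraph C tc) (hG : Derives Γ (handle Γ.S) G)
    (e : G.E) (heA : G.lab e = A) (hothers : ∀ e' : G.E, e' ≠ e → G.lab e' = a)
    (H : Hypergraph C tc) (hH : Derives Γ (handle A) H)
    (hHlab : ∀ e' : H.E, H.lab e' = a) (hHt : H.extType = tc A)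
    (hbad : Bad H) :
    replace G e H ∈ Lang Γ ∧
    (¬ ∃ w : List C, IsIso (replace G e H) (SG w)) ∧
    ¬ IsStringGenerating Γ :=
  stmt_13_general C tc Γ a hta haT A G hG e heA hothers H hH hHlab hbad

end HRGPaper
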